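/- arXiv:1302.1651 — 4 statements merged into one kernel-verified Lean document; each statement's English description precedes it below -/
import Mathlib

section
/- Let θ : (0,∞) → ℝ₊ be continuous and suppose ∫₀¹ exp(∫_v^1 θ(w)/w dw) dv < ∞. Then limsup_{u→0⁺} ∫_u^1 (θ(w)−1)/w dw = −∞; in particular u·exp(∫_u^1 θ(w)/w dw) → 0 as u → 0⁺. -/
open Set MeasureTheory Filter

theorem stmt1 (θ : ℝ → ℝ) (hθc : ContinuousOn θ (Set.Ioi 0))
    (hθ0 : ∀ u ∈ Set.Ioi (0:ℝ), 0 ≤ θ u)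
    (hint : MeasureTheory.IntegrableOn
      (fun v => Real.exp (∫ w in v..(1:ℝ), θ w / w)) (Set.Ioc 0 1)) :
    Filter.Tendsto (fun u => ∫ w in u..(1:ℝ), (θ w - 1) / w)
        (nhdsWithin 0 (Set.Ioi 0)) Filter.atBot ∧
    Filter.Tendsto (fun u => u * Real.exp (∫ w in u..(1:ℝ), θ w / w))
        (nhdsWithin 0 (Set.Ioi 0)) (nhds 0) := by
  set g : ℝ → ℝ := fun v => Real.exp (∫ w in v..(1:ℝ), θ w / w) with hgdef
  have hcont : ContinuousOn (fun w => θ w / w) (Ioi 0) :=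
    hθc.div continuousOn_id (fun x hx => ne_of_gt hx)
  have hii : ∀ a b : ℝ, 0 < a → 0 < b →
      IntervalIntegrable (fun w => θ w / w) volume a b := by
    intro a b ha hb
    refine (hcont.mono ?_).intervalIntegrable
    intro x hx
    exact lt_of_lt_of_le (lt_min ha hb) hx.1
  -- g antitone on (0, ∞)
  have hganti : ∀ u v : ℝ, 0 < u → u ≤ v → g v ≤ g u := by
    intro u v hu huv
    have hv : 0 < v := lt_of_lt_of_le hu huv
    have hsplit : (∫ w in u..v, θ w / w) + ∫ w in v..(1:ℝ), θ w / w
        = ∫ w in u..(1:ℝ), θ w / w :=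
      intervalIntegral.integral_add_adjacent_intervals (hii u v hu hv)
        (hii v 1 hv one_pos)
    have hnn : 0 ≤ ∫ w in u..v, θ w / w := by
      apply intervalIntegral.integral_nonneg huv
      intro x hx
      have hx0 : 0 < x := lt_of_lt_of_le hu hx.1
      exact div_nonneg (hθ0 x hx0) hx0.le
    have : (∫ w in v..(1:ℝ), θ w / w) ≤ ∫ w in u..(1:ℝ), θ w / w := by linarith
    exact Real.exp_le_exp.2 this
  have hgpos : ∀ u : ℝ, 0 < g u := fun u => Real.exp_pos _
  -- tail integral tends to 0
  have hint' : IntegrableOn g (Icc 0 1) :=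
    (integrableOn_Icc_iff_integrableOn_Ioc).2 hint
  have hΦcont : ContinuousOn (fun x => ∫ t in Ioc 0 x, g t) (Icc 0 1) :=
    intervalIntegral.continuousOn_primitive hint'
  have hΦ : Tendsto (fun u => ∫ t in Ioc (0:ℝ) u, g t) (nhdsWithin 0 (Ioi 0)) (nhds 0) := by
    have h0 : (∫ t in Ioc (0:ℝ) (0:ℝ), g t) = 0 := by simp
    have := (hΦcont 0 (by norm_num)).tendsto
    rw [h0] at this
    refine this.mono_left ?_
    rw [← nhdsWithin_Ioc_eq_nhdsGT (by norm_num : (0:ℝ) < 1)]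
    exact nhdsWithin_mono _ Ioc_subset_Icc_self
  -- key bound
  have hbound : ∀ u ∈ Ioc (0:ℝ) 1, u * g u ≤ 2 * ∫ t in Ioc (0:ℝ) u, g t := by
    intro u hu
    obtain ⟨hu0, hu1⟩ := hu
    have hsub : Ioc (u/2) u ⊆ Ioc (0:ℝ) 1 := Ioc_subset_Ioc (by linarith) hu1
    have hA : g u * (volume (Ioc (u/2) u)).toReal ≤ ∫ t in Ioc (u/2) u, g t := by
      refine le_of_eq_of_le ?_ (MeasureTheory.setIntegral_ge_of_const_le (c := g u) measurableSet_Ioc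
        (by simp) ?_ (hint.mono_set hsub))
      · rw [smul_eq_mul, mul_comm]; rfl
      intro x hx
      exact hganti x u (by linarith [hx.1]) hx.2
    have hvol : (volume (Ioc (u/2) u)).toReal = u / 2 := by
      rw [Real.volume_Ioc]
      rw [ENNReal.toReal_ofReal (by linarith)]
      ring
    have hB : (∫ t in Ioc (u/2) u, g t) ≤ ∫ t in Ioc (0:ℝ) u, g t := by
      apply setIntegral_mono_set (hint.mono_set (Ioc_subset_Ioc le_rfl hu1))
      · exact Filter.Eventually.of_forall fun x => (hgpos x).le
      · exact HasSubset.Subset.eventuallyLE (Ioc_subset_Ioc (by linarith) le_rfl)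
    rw [hvol] at hA
    nlinarith [hA, hB]
  -- second conclusion
  have hmem : Ioc (0:ℝ) 1 ∈ nhdsWithin (0:ℝ) (Ioi 0) :=
    Ioc_mem_nhdsGT_of_mem ⟨le_refl 0, one_pos⟩
  have hug : Tendsto (fun u => u * g u) (nhdsWithin 0 (Ioi 0)) (nhds 0) := by
    have h2Φ : Tendsto (fun u => 2 * ∫ t in Ioc (0:ℝ) u, g t)
        (nhdsWithin 0 (Ioi 0)) (nhds 0) := by
      have := hΦ.const_mul 2
      simpa using this
    refine tendsto_of_tendsto_of_tendsto_of_le_of_le' tendsto_const_nhds h2Φ ?_ ?_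
    · filter_upwards [self_mem_nhdsWithin] with u hu
      exact (mul_pos hu (hgpos u)).le
    · filter_upwards [hmem] with u hu
      exact hbound u hu
  refine ⟨?_, hug⟩
  -- first conclusion
  have heq : ∀ u ∈ Ioi (0:ℝ), (∫ w in u..(1:ℝ), (θ w - 1) / w) = Real.log (u * g u) := by
    intro u hu
    have hu0 : (0:ℝ) < u := hu
    have h1 : IntervalIntegrable (fun w => (1:ℝ) / w) volume u 1 := by
      refine (ContinuousOn.intervalIntegrable ?_)
      apply ContinuousOn.div continuousOn_const continuousOn_id
      intro x hx
      have : 0 < x := lt_of_lt_of_le (lt_min hu0 one_pos) hx.1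
      exact ne_of_gt this
    have hsplit : (∫ w in u..(1:ℝ), (θ w - 1) / w)
        = (∫ w in u..(1:ℝ), θ w / w) - ∫ w in u..(1:ℝ), 1 / w := by
      rw [← intervalIntegral.integral_sub (hii u 1 hu0 one_pos) h1]
      congr 1
      ext w
      ring
    have hlog : (∫ w in u..(1:ℝ), 1 / w) = Real.log (1 / u) := by
      apply integral_one_div
      intro h
      have : 0 < min u 1 := lt_min hu0 one_pos
      have := h.1
      simp only [Set.uIcc] at h
      rcases h with ⟨h1', _⟩
      have : min u 1 ≤ 0 := h1'
      linarith [lt_min hu0 one_pos]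
    rw [hsplit, hlog, Real.log_div one_ne_zero (ne_of_gt hu0), Real.log_one,
      Real.log_mul (ne_of_gt hu0) (ne_of_gt (hgpos u)), hgdef, Real.log_exp]
    ring
  have hlogtend : Tendsto (fun u => Real.log (u * g u)) (nhdsWithin 0 (Ioi 0)) atBot := by
    apply Real.tendsto_log_nhdsGT_zero.comp
    apply tendsto_nhdsWithin_of_tendsto_nhds_of_eventually_within _ hug
    filter_upwards [self_mem_nhdsWithin] with u hu
    exact mul_pos hu (hgpos u)
  refine hlogtend.congr' ?_
  filter_upwards [self_mem_nhdsWithin] with u hu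
  exact (heq u hu).symm
end

section
/- Let θ : (0,∞) → ℝ₊ be continuous and suppose there exist κ > 1 and ε₀ ∈ (0, e^{−κ/2}) such that θ(u) ≤ 1 + κ/log u for all u ∈ (0, ε₀]. Then ∫₀¹ exp(∫_v^1 θ(w)/w dw) dv < ∞. -/
open Set MeasureTheory Filter

theorem stmt2 (θ : ℝ → ℝ) (hθc : ContinuousOn θ (Set.Ioi 0))
    (hθ0 : ∀ u ∈ Set.Ioi (0:ℝ), 0 ≤ θ u)
    (κ ε₀ : ℝ) (hκ : 1 < κ) (hε₀ : ε₀ ∈ Set.Ioo 0 (Real.exp (-κ/2)))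
    (hbound : ∀ u ∈ Set.Ioc (0:ℝ) ε₀, θ u ≤ 1 + κ / Real.log u) :
    MeasureTheory.IntegrableOn
      (fun v => Real.exp (∫ w in v..(1:ℝ), θ w / w)) (Set.Ioc 0 1) := by
  obtain ⟨hε0pos, hε0lt⟩ := hε₀
  have hκ0 : (0:ℝ) < κ := lt_trans one_pos hκ
  have hε1 : ε₀ < 1 := lt_trans hε0lt (by
    rw [Real.exp_lt_one_iff]; linarith)
  set g : ℝ → ℝ := fun w => θ w / w with hg
  have hgc : ContinuousOn g (Ioi 0) :=
    hθc.div continuousOn_id (fun w hw => ne_of_gt hw)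
  have hgint : ∀ a b : ℝ, 0 < a → 0 < b → IntervalIntegrable g MeasureTheory.volume a b := by
    intro a b ha hb
    apply (hgc.mono ?_).intervalIntegrable
    intro x hx
    rcases Set.mem_uIcc.mp hx with h | h
    · exact lt_of_lt_of_le ha h.1
    · exact lt_of_lt_of_le hb h.1
  -- continuity of the integrand on Ioc 0 1
  have hEc : ContinuousOn (fun v => Real.exp (∫ w in v..(1:ℝ), g w)) (Ioc 0 1) := by
    apply Real.continuous_exp.comp_continuousOn
    intro v₀ hv₀
    apply ContinuousAt.continuousWithinAt
    have ha : (0:ℝ) < v₀ / 2 := by linarith [hv₀.1]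
    have key : ∀ v ∈ Ioo (v₀/2) (2:ℝ),
        (∫ w in v..(1:ℝ), g w)
          = (∫ w in (v₀/2)..(1:ℝ), g w) - ∫ w in (v₀/2)..v, g w := by
      intro v hv
      have h1 : IntervalIntegrable g MeasureTheory.volume (v₀/2) v :=
        hgint _ _ ha (lt_trans ha hv.1)
      have h2 : IntervalIntegrable g MeasureTheory.volume v 1 :=
        hgint _ _ (lt_trans ha hv.1) one_pos
      rw [← intervalIntegral.integral_add_adjacent_intervals h1 h2]; ring
    have hmem : Ioo (v₀/2) (2:ℝ) ∈ nhds v₀ :=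
      Ioo_mem_nhds (by linarith [hv₀.1]) (by linarith [hv₀.2])
    rw [continuousAt_congr (Filter.eventuallyEq_of_mem hmem key)]
    have hP : ContinuousAt (fun v => ∫ w in (v₀/2)..v, g w) v₀ := by
      have hIO : IntegrableOn g (uIcc (v₀/2) 2) MeasureTheory.volume := by
        rw [uIcc_of_le (by linarith [hv₀.1, hv₀.2])]
        apply (hgc.mono ?_).integrableOn_Icc
        intro x hx; exact lt_of_lt_of_le ha hx.1
      have hco := intervalIntegral.continuousOn_primitive_interval (a := v₀/2) (b := 2) hIO
      apply hco.continuousAt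
      rw [uIcc_of_le (by linarith [hv₀.1, hv₀.2])]
      exact Icc_mem_nhds (by linarith [hv₀.1]) (by linarith [hv₀.2])
    exact ContinuousAt.sub continuousAt_const hP
  -- the part away from zero
  have hfar : IntegrableOn (fun v => Real.exp (∫ w in v..(1:ℝ), g w)) (Ioc ε₀ 1) := by
    have : IntegrableOn (fun v => Real.exp (∫ w in v..(1:ℝ), g w)) (Icc ε₀ 1) := by
      apply ContinuousOn.integrableOn_Icc
      exact hEc.mono (fun x hx => ⟨lt_of_lt_of_le hε0pos hx.1, hx.2⟩)
    exact this.mono_set Ioc_subset_Icc_self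
  -- the part near zero
  set C₁ : ℝ := ∫ w in ε₀..(1:ℝ), g w with hC₁
  set H : ℝ → ℝ := fun w => Real.log w + κ * Real.log (-Real.log w) with hH
  set C : ℝ := Real.exp (H ε₀ + C₁) with hC
  -- integrability of the dominating function
  have hbint : IntegrableOn (fun v => v⁻¹ * (-Real.log v) ^ (-κ)) (Ioc 0 ε₀) := by
    rw [integrableOn_Ioc_iff_integrableOn_Ioo]
    have hT : (0:ℝ) < -Real.log ε₀ := by
      rw [neg_pos]; exact Real.log_neg hε0pos hε1
    have himg : (fun t => Real.exp (-t)) '' (Ioi (-Real.log ε₀)) = Ioo 0 ε₀ := by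
      ext v
      constructor
      · rintro ⟨t, ht, rfl⟩
        refine ⟨Real.exp_pos _, ?_⟩
        have : -t < Real.log ε₀ := by linarith [mem_Ioi.mp ht]
        calc Real.exp (-t) < Real.exp (Real.log ε₀) := Real.exp_lt_exp.mpr this
          _ = ε₀ := Real.exp_log hε0pos
      · rintro ⟨hv0, hvε⟩
        refine ⟨-Real.log v, ?_, by simp [Real.exp_log hv0]⟩
        rw [mem_Ioi]
        have := Real.log_lt_log hv0 hvε
        linarith
    have hderiv : ∀ t ∈ Ioi (-Real.log ε₀),
        HasDerivWithinAt (fun t => Real.exp (-t)) (-Real.exp (-t)) (Ioi (-Real.log ε₀)) t := by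
      intro t _
      have h1 : HasDerivAt (fun t : ℝ => Real.exp (-t)) (Real.exp (-t) * (-1)) t :=
        (Real.hasDerivAt_exp (-t)).comp t (hasDerivAt_neg t)
      simpa using h1.hasDerivWithinAt
    have hinj : InjOn (fun t => Real.exp (-t)) (Ioi (-Real.log ε₀)) := by
      intro a _ b _ hab
      have := Real.exp_injective hab
      linarith [neg_injective this]
    rw [← himg, MeasureTheory.integrableOn_image_iff_integrableOn_abs_deriv_smul
      measurableSet_Ioi hderiv hinj]
    apply ((integrableOn_Ioi_rpow_of_lt (by linarith : -κ < -1) hT).congr_fun ?_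
      measurableSet_Ioi)
    intro t ht
    have htpos : 0 < t := lt_trans hT (mem_Ioi.mp ht)
    have hexp : 0 < Real.exp (-t) := Real.exp_pos _
    simp only [smul_eq_mul, abs_neg, abs_of_pos hexp, Real.log_exp, neg_neg]
    rw [← mul_assoc, mul_inv_cancel₀ (ne_of_gt hexp), one_mul]
  -- pointwise bound near zero
  have hkey : ∀ v ∈ Ioc (0:ℝ) ε₀,
      Real.exp (∫ w in v..(1:ℝ), g w) ≤ C * (v⁻¹ * (-Real.log v) ^ (-κ)) := by
    intro v hv
    obtain ⟨hv0, hvε⟩ := hv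
    have hvlt1 : v < 1 := lt_of_le_of_lt hvε hε1
    have hlogv : Real.log v < 0 := Real.log_neg hv0 hvlt1
    have hlv : 0 < -Real.log v := by linarith
    -- split the integral
    have hi1 : IntervalIntegrable g MeasureTheory.volume v ε₀ := hgint _ _ hv0 hε0pos
    have hi2 : IntervalIntegrable g MeasureTheory.volume ε₀ 1 := hgint _ _ hε0pos one_pos
    have hsplit : (∫ w in v..(1:ℝ), g w) = (∫ w in v..ε₀, g w) + C₁ :=
      (intervalIntegral.integral_add_adjacent_intervals hi1 hi2).symm
    -- the comparison function
    set h : ℝ → ℝ := fun w => w⁻¹ + κ * (w * Real.log w)⁻¹ with hh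
    have hIccsub : Icc v ε₀ ⊆ Ioc (0:ℝ) ε₀ := fun x hx => ⟨lt_of_lt_of_le hv0 hx.1, hx.2⟩
    have hhc : ContinuousOn h (Icc v ε₀) := by
      apply ContinuousOn.add
      · exact continuousOn_inv₀.mono (fun x hx => ne_of_gt (lt_of_lt_of_le hv0 hx.1))
      · apply ContinuousOn.const_smul (M := ℝ) ?_ κ |>.congr (fun x _ => rfl)
        apply ContinuousOn.inv₀
        · apply continuousOn_id.mul (Real.continuousOn_log.mono ?_)
          intro x hx
          exact ne_of_gt (lt_of_lt_of_le hv0 hx.1)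
        · intro x hx
          have hx0 : 0 < x := lt_of_lt_of_le hv0 hx.1
          have : Real.log x < 0 := Real.log_neg hx0 (lt_of_le_of_lt hx.2 hε1)
          exact mul_ne_zero (ne_of_gt hx0) (ne_of_lt this)
    have hih : IntervalIntegrable h MeasureTheory.volume v ε₀ := by
      apply (hhc.mono ?_).intervalIntegrable
      rw [uIcc_of_le hvε]
    have hmono : (∫ w in v..ε₀, g w) ≤ ∫ w in v..ε₀, h w := by
      apply intervalIntegral.integral_mono_on hvε hi1 hih
      intro w hw
      have hw0 : 0 < w := lt_of_lt_of_le hv0 hw.1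
      have hlw : Real.log w < 0 := Real.log_neg hw0 (lt_of_le_of_lt hw.2 hε1)
      have h1 : θ w / w ≤ (1 + κ / Real.log w) / w := by
        gcongr
        exact hbound w (hIccsub hw)
      calc g w ≤ (1 + κ / Real.log w) / w := h1
        _ = h w := by
          rw [hh, add_div, one_div, div_div, mul_comm (Real.log w) w, div_eq_mul_inv]
    -- FTC computation
    have hftc : (∫ w in v..ε₀, h w) = H ε₀ - H v := by
      apply intervalIntegral.integral_eq_sub_of_hasDerivAt
      · intro w hw
        rw [uIcc_of_le hvε] at hw
        have hw0 : 0 < w := lt_of_lt_of_le hv0 hw.1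
        have hlw : Real.log w < 0 := Real.log_neg hw0 (lt_of_le_of_lt hw.2 hε1)
        have hnlw : 0 < -Real.log w := by linarith
        have h1 : HasDerivAt Real.log w⁻¹ w := Real.hasDerivAt_log (ne_of_gt hw0)
        have h2 : HasDerivAt (fun t : ℝ => -Real.log t) (-w⁻¹) w := h1.neg
        have h3 : HasDerivAt Real.log (-Real.log w)⁻¹ (-Real.log w) :=
          Real.hasDerivAt_log (ne_of_gt hnlw)
        have h4 : HasDerivAt (fun t : ℝ => Real.log (-Real.log t))
            ((-Real.log w)⁻¹ * -w⁻¹) w := by have := h3.comp w h2; exact this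
        have h5 := h1.add (h4.const_mul κ)
        have hiden : (-Real.log w)⁻¹ * -w⁻¹ = (w * Real.log w)⁻¹ := by
          rw [inv_neg, neg_mul_neg, mul_inv, mul_comm]
        convert h5 using 1
        · rfl
        rw [hiden]
      · exact hih
    -- putting things together
    have hexpH : Real.exp (H v) = v * (-Real.log v) ^ κ := by
      rw [hH]
      rw [Real.exp_add, Real.exp_log hv0, Real.rpow_def_of_pos hlv, mul_comm κ]
    have hle : (∫ w in v..(1:ℝ), g w) ≤ H ε₀ + C₁ - H v := by
      rw [hsplit]; linarith [hmono, hftc.le, hftc.ge]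
    calc Real.exp (∫ w in v..(1:ℝ), g w) ≤ Real.exp (H ε₀ + C₁ - H v) :=
          Real.exp_le_exp.mpr hle
      _ = C * (v⁻¹ * (-Real.log v) ^ (-κ)) := by
          rw [Real.exp_sub, hexpH, hC, Real.rpow_neg hlv.le, div_eq_mul_inv, mul_inv]
  have hnear : IntegrableOn (fun v => Real.exp (∫ w in v..(1:ℝ), g w)) (Ioc 0 ε₀) := by
    apply MeasureTheory.Integrable.mono' (hbint.const_mul C)
    · exact (hEc.mono (fun x hx => ⟨hx.1, le_trans hx.2 hε1.le⟩)).aestronglyMeasurable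
        measurableSet_Ioc
    · filter_upwards [MeasureTheory.self_mem_ae_restrict measurableSet_Ioc] with v hv
      rw [Real.norm_eq_abs, abs_of_pos (Real.exp_pos _)]
      exact hkey v hv
  rw [← Ioc_union_Ioc_eq_Ioc hε0pos.le hε1.le]
  exact hnear.union hfar
end

section
/- For every p ∈ (1,2) there exists α_p > 0 such that for all x, y ∈ ℝ^d, ∫₀¹ |y + t(x−y)|^{2(p−1)} dt ≥ α_p (|x|^{2(p−1)} + |y|^{2(p−1)}). -/
theorem stmt7 (d : ℕ) (p : ℝ) (hp : p ∈ Set.Ioo (1:ℝ) 2) :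
    ∃ α > (0:ℝ), ∀ x y : EuclideanSpace ℝ (Fin d),
      α * (‖x‖ ^ (2 * (p - 1)) + ‖y‖ ^ (2 * (p - 1)))
        ≤ ∫ t in (0:ℝ)..1, ‖y + t • (x - y)‖ ^ (2 * (p - 1)) := by
  obtain ⟨hp1, hp2⟩ := hp
  set ρ : ℝ := 2 * (p - 1) with hρdef
  have hρ0 : 0 < ρ := by rw [hρdef]; linarith
  have hρ2 : ρ ≤ 2 := by rw [hρdef]; linarith
  have hcont : ∀ x y : EuclideanSpace ℝ (Fin d),
      Continuous fun t : ℝ => ‖y + t • (x - y)‖ ^ ρ := by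
    intro x y
    apply Continuous.rpow_const
    · continuity
    · intro t; right; exact hρ0.le
  have hint : ∀ (x y : EuclideanSpace ℝ (Fin d)) (a b : ℝ),
      IntervalIntegrable (fun t : ℝ => ‖y + t • (x - y)‖ ^ ρ)
        MeasureTheory.volume a b :=
    fun x y a b => (hcont x y).intervalIntegrable a b
  have key : ∀ x y : EuclideanSpace ℝ (Fin d), ‖y‖ ≤ ‖x‖ →
      ‖x‖ ^ ρ / 16 ≤ ∫ t in (0:ℝ)..1, ‖y + t • (x - y)‖ ^ ρ := by
    intro x y hxy
    have hbound : ∀ t ∈ Set.Icc (3/4 : ℝ) 1,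
        ‖x‖ ^ ρ / 4 ≤ ‖y + t • (x - y)‖ ^ ρ := by
      intro t ht
      obtain ⟨ht1, ht2⟩ := ht
      have hnorm : ‖x‖ / 2 ≤ ‖y + t • (x - y)‖ := by
        have h1 : y + t • (x - y) = t • x - (t - 1) • y := by module
        rw [h1]
        have h2 := norm_sub_norm_le (t • x) ((t - 1) • y)
        rw [norm_smul, norm_smul] at h2
        have h3 : ‖(t : ℝ)‖ = t := by
          rw [Real.norm_eq_abs, abs_of_nonneg]; linarith
        have h4 : ‖(t - 1 : ℝ)‖ = 1 - t := by
          rw [Real.norm_eq_abs, abs_of_nonpos] <;> linarith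
        rw [h3, h4] at h2
        nlinarith [norm_nonneg y, norm_nonneg x]
      have h5 : (‖x‖ / 2) ^ ρ ≤ ‖y + t • (x - y)‖ ^ ρ :=
        Real.rpow_le_rpow (by positivity) hnorm hρ0.le
      have h6 : (‖x‖ / 2) ^ ρ = ‖x‖ ^ ρ / (2 : ℝ) ^ ρ :=
        Real.div_rpow (norm_nonneg x) (by norm_num : (0:ℝ) ≤ 2) ρ
      have h7 : (2 : ℝ) ^ ρ ≤ (2 : ℝ) ^ (2 : ℝ) :=
        Real.rpow_le_rpow_of_exponent_le (by norm_num) hρ2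
      have h8 : (2 : ℝ) ^ (2 : ℝ) = 4 := by
        rw [show (2:ℝ) = ((2:ℕ):ℝ) by norm_num, Real.rpow_natCast]; norm_num
      have h9 : (0:ℝ) < (2 : ℝ) ^ ρ := Real.rpow_pos_of_pos (by norm_num) ρ
      have h10 : ‖x‖ ^ ρ / 4 ≤ ‖x‖ ^ ρ / (2 : ℝ) ^ ρ := by
        apply div_le_div_of_nonneg_left (by positivity) h9
        rw [← h8]; exact h7
      linarith [h6 ▸ h5]
    have hsplit : (∫ t in (0:ℝ)..1, ‖y + t • (x - y)‖ ^ ρ)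
        = (∫ t in (0:ℝ)..(3/4), ‖y + t • (x - y)‖ ^ ρ)
          + ∫ t in (3/4:ℝ)..1, ‖y + t • (x - y)‖ ^ ρ :=
      (intervalIntegral.integral_add_adjacent_intervals
        (hint x y 0 (3/4)) (hint x y (3/4) 1)).symm
    have h1 : (0:ℝ) ≤ ∫ t in (0:ℝ)..(3/4), ‖y + t • (x - y)‖ ^ ρ :=
      intervalIntegral.integral_nonneg (by norm_num)
        (fun t _ => by positivity)
    have h2 : (∫ _ in (3/4:ℝ)..1, (‖x‖ ^ ρ / 4))
        ≤ ∫ t in (3/4:ℝ)..1, ‖y + t • (x - y)‖ ^ ρ := by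
      apply intervalIntegral.integral_mono_on (by norm_num)
        intervalIntegrable_const (hint x y (3/4) 1) hbound
    rw [intervalIntegral.integral_const, smul_eq_mul] at h2
    have : (1 - 3/4 : ℝ) * (‖x‖ ^ ρ / 4) = ‖x‖ ^ ρ / 16 := by ring
    linarith [this ▸ h2]
  have hswap : ∀ x y : EuclideanSpace ℝ (Fin d),
      (∫ t in (0:ℝ)..1, ‖y + t • (x - y)‖ ^ ρ)
        = ∫ t in (0:ℝ)..1, ‖x + t • (y - x)‖ ^ ρ := by
    intro x y
    have h := intervalIntegral.integral_comp_sub_left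
      (a := 0) (b := 1) (fun s : ℝ => ‖y + s • (x - y)‖ ^ ρ) 1
    rw [show (1:ℝ)-1 = 0 by norm_num, show (1:ℝ)-0 = 1 by norm_num] at h
    rw [← h]
    apply intervalIntegral.integral_congr
    intro t _
    have h2 : y + (1 - t) • (x - y) = x + t • (y - x) := by module
    simp only [h2]
  refine ⟨1/32, by norm_num, fun x y => ?_⟩
  rcases le_total ‖y‖ ‖x‖ with h | h
  · have h1 := key x y h
    have h2 : ‖y‖ ^ ρ ≤ ‖x‖ ^ ρ :=
      Real.rpow_le_rpow (norm_nonneg y) h hρ0.le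
    linarith
  · have h1 := key y x h
    rw [hswap x y]
    have h2 : ‖x‖ ^ ρ ≤ ‖y‖ ^ ρ :=
      Real.rpow_le_rpow (norm_nonneg x) h hρ0.le
    linarith
end

section
/- For every integer d > 2 and every σ > 0, ∫₀^∞ (1 − r²) r^{d−1} e^{−(r²−1)²/(2σ²)} dr < 0. -/
open MeasureTheory

lemma pow_le_factorial_mul_exp (m : ℕ) {t : ℝ} (ht : 0 ≤ t) :
    t ^ m ≤ m.factorial * Real.exp t := by
  have h := Real.sum_le_exp_of_nonneg ht (m + 1)
  have h2 : t ^ m / m.factorial ≤ ∑ i ∈ Finset.range (m + 1), t ^ i / i.factorial := by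
    refine Finset.single_le_sum (f := fun i => t ^ i / (i.factorial : ℝ)) ?_ ?_
    · intro i _
      positivity
    · simp
  have hm : (0 : ℝ) < m.factorial := by positivity
  calc t ^ m = m.factorial * (t ^ m / m.factorial) := by field_simp
  _ ≤ m.factorial * Real.exp t := mul_le_mul_of_nonneg_left (h2.trans h) hm.le

lemma key_integrable (n : ℕ) (σ : ℝ) (hσ : 0 < σ) :
    IntegrableOn (fun r : ℝ => (1 - r^2) * r^n * Real.exp (-(r^2 - 1)^2 / (2 * σ^2)))
      (Set.Ioi 0) := by
  have hcont : Continuous (fun r : ℝ => (1 - r^2) * r^n * Real.exp (-(r^2 - 1)^2 / (2 * σ^2))) := by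
    continuity
  have h1 : IntegrableOn (fun r : ℝ => (1 - r^2) * r^n * Real.exp (-(r^2 - 1)^2 / (2 * σ^2)))
      (Set.Ioc 0 2) := hcont.integrableOn_Ioc
  have h2 : IntegrableOn (fun r : ℝ => (1 - r^2) * r^n * Real.exp (-(r^2 - 1)^2 / (2 * σ^2)))
      (Set.Ioi 2) := by
    set m := n + 1 with hm
    set C : ℝ := (4 ^ m * (2 * σ^2) ^ m) * m.factorial with hC
    have hC0 : 0 < C := by positivity
    have hg : IntegrableOn (fun x : ℝ => C * x ^ (-2 : ℝ)) (Set.Ioi 2) :=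
      (integrableOn_Ioi_rpow_of_lt (by norm_num) (by norm_num)).const_mul C
    refine Integrable.mono' hg (hcont.aestronglyMeasurable.restrict) ?_
    filter_upwards [ae_restrict_mem measurableSet_Ioi] with x hx
    have hx2 : (2 : ℝ) < x := hx
    have hx0 : (0 : ℝ) < x := by linarith
    have hx1 : 1 ≤ x := by linarith
    have hxsq : (4 : ℝ) < x ^ 2 := by nlinarith
    set t : ℝ := (x^2 - 1)^2 / (2 * σ^2) with hT
    have ht0 : 0 ≤ t := by positivity
    have hexp : Real.exp (-t) * t ^ m ≤ m.factorial := by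
      have h := pow_le_factorial_mul_exp m ht0
      rw [Real.exp_neg, inv_mul_le_iff₀ (Real.exp_pos t)]
      linarith
    have hrpow : x ^ (-2 : ℝ) = (x ^ 2)⁻¹ := by
      rw [show (-2 : ℝ) = -((2:ℕ):ℝ) by norm_num, Real.rpow_neg hx0.le, Real.rpow_natCast]
    have habs1 : |1 - x^2| = x^2 - 1 := by
      rw [abs_of_nonpos (by nlinarith)]; ring
    have habsx : |x ^ n| = x ^ n := abs_of_nonneg (by positivity)
    rw [Real.norm_eq_abs, abs_mul, abs_mul, Real.abs_exp, habs1, habsx, hrpow,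
      show -(x^2-1)^2/(2*σ^2) = -t by rw [hT]; ring,
      ← div_eq_mul_inv, le_div_iff₀ (by positivity : (0:ℝ) < x ^ 2)]
    have hmulpow : (2*σ^2)^m * t^m = (x^2-1)^(2*m) := by
      rw [← mul_pow, show (2*σ^2) * t = (x^2-1)^2 by rw [hT]; field_simp, ← pow_mul]
    have key : x ^ (n+4) ≤ 4^m * (x^2-1)^(2*m) := by
      calc x ^ (n+4) ≤ x ^ (4*m) := pow_le_pow_right₀ hx1 (by omega)
      _ = (x^2) ^ (2*m) := by rw [← pow_mul]; ring_nf
      _ ≤ (2*(x^2-1)) ^ (2*m) := by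
          refine pow_le_pow_left₀ (by positivity) (by nlinarith) _
      _ = 4^m * (x^2-1)^(2*m) := by rw [mul_pow, pow_mul]; norm_num
    calc (x^2 - 1) * x^n * Real.exp (-t) * x^2
        ≤ x^2 * x^n * Real.exp (-t) * x^2 := by
          have hE : (0:ℝ) ≤ Real.exp (-t) := (Real.exp_pos _).le
          gcongr
          linarith
      _ = x ^ (n+4) * Real.exp (-t) := by rw [pow_add]; ring
      _ ≤ (4^m * ((2*σ^2)^m * t^m)) * Real.exp (-t) := by
          rw [hmulpow]
          exact mul_le_mul_of_nonneg_right key (Real.exp_pos _).le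
      _ = (4^m * (2*σ^2)^m) * (Real.exp (-t) * t^m) := by ring
      _ ≤ (4^m * (2*σ^2)^m) * m.factorial := by
          exact mul_le_mul_of_nonneg_left hexp (by positivity)
      _ = C := by rw [hC]
  have hsplit : Set.Ioi (0:ℝ) = Set.Ioc 0 2 ∪ Set.Ioi 2 := by
    rw [Set.Ioc_union_Ioi_eq_Ioi (by norm_num)]
  rw [hsplit]
  exact h1.union h2

lemma base_integral (σ : ℝ) (hσ : 0 < σ) :
    ∫ r in Set.Ioi (0:ℝ), (1 - r^2) * r^1 * Real.exp (-(r^2 - 1)^2 / (2 * σ^2))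
      = 0 - σ^2/2 * Real.exp (-(0^2 - 1)^2 / (2 * σ^2)) := by
  have hderiv : ∀ x ∈ Set.Ioi (0:ℝ),
      HasDerivAt (fun r : ℝ => σ^2/2 * Real.exp (-(r^2 - 1)^2 / (2 * σ^2)))
        ((1 - x^2) * x^1 * Real.exp (-(x^2 - 1)^2 / (2 * σ^2))) x := by
    intro x _
    have h1 : HasDerivAt (fun r : ℝ => -(r^2 - 1)^2 / (2 * σ^2))
        (-(2 * (x^2 - 1) * (2 * x)) / (2 * σ^2)) x := by
      have h0 : HasDerivAt (fun r : ℝ => r^2 - 1) (2 * x) x := by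
        simpa using ((hasDerivAt_pow 2 x).sub_const 1)
      have := (h0.pow 2).neg.div_const (2 * σ^2)
      refine this.congr_deriv ?_
      push_cast; ring
    have h2 := (h1.exp).const_mul (σ^2/2)
    refine h2.congr_deriv ?_
    field_simp
    ring
  have htend : Filter.Tendsto (fun r : ℝ => σ^2/2 * Real.exp (-(r^2 - 1)^2 / (2 * σ^2)))
      Filter.atTop (nhds 0) := by
    have h1 : Filter.Tendsto (fun r : ℝ => -(r^2 - 1)^2 / (2 * σ^2)) Filter.atTop Filter.atBot := by
      have ha : Filter.Tendsto (fun r : ℝ => r^2 - 1) Filter.atTop Filter.atTop := by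
        simpa [sub_eq_add_neg] using Filter.tendsto_atTop_add_const_right Filter.atTop (-1:ℝ)
          (Filter.tendsto_pow_atTop (two_ne_zero))
      have hsq : Filter.Tendsto (fun r : ℝ => (r^2 - 1)^2) Filter.atTop Filter.atTop :=
        (Filter.tendsto_pow_atTop (two_ne_zero)).comp ha
      have := hsq.const_mul_atTop_of_neg (show -(2 * σ^2)⁻¹ < 0 by
        simp only [neg_lt, neg_zero]; positivity)
      refine this.congr (fun r => ?_)
      field_simp
    have h2 := Real.tendsto_exp_atBot.comp h1
    have h3 := h2.const_mul (σ^2/2)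
    simpa using h3
  have hcont : ContinuousWithinAt (fun r : ℝ => σ^2/2 * Real.exp (-(r^2 - 1)^2 / (2 * σ^2)))
      (Set.Ici 0) 0 := by
    apply Continuous.continuousWithinAt
    continuity
  exact integral_Ioi_of_hasDerivAt_of_tendsto hcont hderiv
    (by simpa using key_integrable 1 σ hσ) htend

theorem stmt11 (d : ℕ) (hd : 2 < d) (σ : ℝ) (hσ : 0 < σ) :
    (∫ r in Set.Ioi (0:ℝ),
        (1 - r^2) * r^(d-1) * Real.exp (-(r^2 - 1)^2 / (2 * σ^2))) < 0 := by
  have hmono : (∫ r in Set.Ioi (0:ℝ),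
        (1 - r^2) * r^(d-1) * Real.exp (-(r^2 - 1)^2 / (2 * σ^2)))
      ≤ ∫ r in Set.Ioi (0:ℝ), (1 - r^2) * r^1 * Real.exp (-(r^2 - 1)^2 / (2 * σ^2)) := by
    refine setIntegral_mono_on (key_integrable (d-1) σ hσ) (key_integrable 1 σ hσ)
      measurableSet_Ioi ?_
    intro r hr
    have hr0 : (0:ℝ) < r := hr
    have hexp : 0 ≤ Real.exp (-(r^2 - 1)^2 / (2 * σ^2)) := (Real.exp_pos _).le
    refine mul_le_mul_of_nonneg_right ?_ hexp
    rcases le_total r 1 with h1 | h1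
    · have hp : r ^ (d-1) ≤ r ^ 1 := pow_le_pow_of_le_one hr0.le h1 (by omega)
      exact mul_le_mul_of_nonneg_left hp (by nlinarith)
    · have hp : r ^ 1 ≤ r ^ (d-1) := pow_le_pow_right₀ h1 (by omega)
      exact mul_le_mul_of_nonpos_left hp (by nlinarith)
  have hbase := base_integral σ hσ
  have hpos : 0 < σ^2/2 * Real.exp (-(0^2 - 1)^2 / (2 * σ^2)) := by positivity
  linarith
end
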